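/- For all smooth functions u, v : ℝ → ℝ, the pair 𝔓₀ applied to (δH₂/δu, δH₂/δv) = (−8u² + (40/9)uv − (5/9)v² + 2u_xx − (5/9)v_xx, (20/9)u² − (10/9)uv + (7/54)v² − (5/9)u_xx + (4/27)v_xx) equals pointwise the pair (Q₁ᵘ, Q₁ᵛ) given by the first commuting flow of the KKS hierarchy; that is, the first commuting flow is Hamiltonian with respect to 𝔓₀ with Hamiltonian density H₂. -/

import Mathlib

/-- First component `Q₁ᵘ` of the first commuting flow of the KKS hierarchy. -/
noncomputable def Q1u (u v : ℝ → ℝ) (x : ℝ) : ℝ :=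
  2 * iteratedDeriv 5 u x - (5 / 9) * iteratedDeriv 5 v x
    - 20 * u x * iteratedDeriv 3 u x + (50 / 9) * u x * iteratedDeriv 3 v x
    + (40 / 9) * v x * iteratedDeriv 3 u x - (10 / 9) * v x * iteratedDeriv 3 v x
    - 50 * deriv u x * iteratedDeriv 2 u x + (125 / 9) * deriv u x * iteratedDeriv 2 v x
    + (40 / 3) * deriv v x * iteratedDeriv 2 u x - (10 / 3) * deriv v x * iteratedDeriv 2 v x
    - (40 / 3) * u x * v x * deriv u x + (20 / 9) * u x * v x * deriv v x
    + 40 * (u x) ^ 2 * deriv u x - (80 / 9) * (u x) ^ 2 * deriv v x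
    + (5 / 9) * (v x) ^ 2 * deriv u x

/-- Second component `Q₁ᵛ` of the first commuting flow of the KKS hierarchy. -/
noncomputable def Q1v (u v : ℝ → ℝ) (x : ℝ) : ℝ :=
  5 * iteratedDeriv 5 u x - (4 / 3) * iteratedDeriv 5 v x
    - 40 * u x * iteratedDeriv 3 u x + 10 * u x * iteratedDeriv 3 v x
    + (10 / 3) * v x * iteratedDeriv 3 u x - (5 / 9) * v x * iteratedDeriv 3 v x
    - 120 * deriv u x * iteratedDeriv 2 u x + 30 * deriv u x * iteratedDeriv 2 v x
    + (80 / 3) * deriv v x * iteratedDeriv 2 u x - (55 / 9) * deriv v x * iteratedDeriv 2 v x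
    + (160 / 3) * u x * v x * deriv u x - 20 * u x * v x * deriv v x
    + (40 / 3) * (u x) ^ 2 * deriv v x - (40 / 3) * (v x) ^ 2 * deriv u x
    + (35 / 9) * (v x) ^ 2 * deriv v x

/-- Derivative of an iterated derivative of a smooth function. -/
lemma hIter {w : ℝ → ℝ} (hw : ContDiff ℝ (⊤ : ℕ∞) w) (n : ℕ) (x : ℝ) :
    HasDerivAt (iteratedDeriv n w) (iteratedDeriv (n + 1) w x) x := by
  rw [iteratedDeriv_succ]
  exact ((hw.differentiable_iteratedDeriv n (by exact_mod_cast ENat.coe_lt_top n)) x).hasDerivAt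

lemma hIter0 {w : ℝ → ℝ} (hw : ContDiff ℝ (⊤ : ℕ∞) w) (x : ℝ) :
    HasDerivAt w (iteratedDeriv 1 w x) x := by
  have h := hIter hw 0 x
  rwa [iteratedDeriv_zero] at h

/-- First derivative of the quadratic density. -/
lemma dF0 (u v : ℝ → ℝ) (hu : ContDiff ℝ (⊤ : ℕ∞) u) (hv : ContDiff ℝ (⊤ : ℕ∞) v)
    (a b c d e : ℝ) (x : ℝ) :
    deriv (fun y => a * u y ^ 2 + b * (u y * v y) + c * v y ^ 2
        + d * iteratedDeriv 2 u y + e * iteratedDeriv 2 v y) x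
      = 2 * a * (u x * iteratedDeriv 1 u x)
        + b * (iteratedDeriv 1 u x * v x + u x * iteratedDeriv 1 v x)
        + 2 * c * (v x * iteratedDeriv 1 v x)
        + d * iteratedDeriv 3 u x + e * iteratedDeriv 3 v x := by
  have hu0 := hIter0 hu x
  have hv0 := hIter0 hv x
  have H := (((((hu0.pow 2).const_mul a).add ((hu0.mul hv0).const_mul b)).add
      ((hv0.pow 2).const_mul c)).add ((hIter hu 2 x).const_mul d)).add
      ((hIter hv 2 x).const_mul e)
  exact H.deriv.trans (by ring)

/-- Second derivative of the quadratic density. -/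
lemma dF1 (u v : ℝ → ℝ) (hu : ContDiff ℝ (⊤ : ℕ∞) u) (hv : ContDiff ℝ (⊤ : ℕ∞) v)
    (a b c d e : ℝ) (x : ℝ) :
    deriv (fun y => 2 * a * (u y * iteratedDeriv 1 u y)
        + b * (iteratedDeriv 1 u y * v y + u y * iteratedDeriv 1 v y)
        + 2 * c * (v y * iteratedDeriv 1 v y)
        + d * iteratedDeriv 3 u y + e * iteratedDeriv 3 v y) x
      = 2 * a * (iteratedDeriv 1 u x ^ 2 + u x * iteratedDeriv 2 u x)
        + b * (iteratedDeriv 2 u x * v x + 2 * (iteratedDeriv 1 u x * iteratedDeriv 1 v x)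
            + u x * iteratedDeriv 2 v x)
        + 2 * c * (iteratedDeriv 1 v x ^ 2 + v x * iteratedDeriv 2 v x)
        + d * iteratedDeriv 4 u x + e * iteratedDeriv 4 v x := by
  have hu0 := hIter0 hu x
  have hv0 := hIter0 hv x
  have H := ((((((hu0.mul (hIter hu 1 x)).const_mul (2 * a)).add
      ((((hIter hu 1 x).mul hv0).add (hu0.mul (hIter hv 1 x))).const_mul b)).add
      ((hv0.mul (hIter hv 1 x)).const_mul (2 * c))).add
      ((hIter hu 3 x).const_mul d)).add ((hIter hv 3 x).const_mul e))
  exact H.deriv.trans (by ring)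

/-- Third derivative of the quadratic density. -/
lemma dF2 (u v : ℝ → ℝ) (hu : ContDiff ℝ (⊤ : ℕ∞) u) (hv : ContDiff ℝ (⊤ : ℕ∞) v)
    (a b c d e : ℝ) (x : ℝ) :
    deriv (fun y => 2 * a * (iteratedDeriv 1 u y ^ 2 + u y * iteratedDeriv 2 u y)
        + b * (iteratedDeriv 2 u y * v y + 2 * (iteratedDeriv 1 u y * iteratedDeriv 1 v y)
            + u y * iteratedDeriv 2 v y)
        + 2 * c * (iteratedDeriv 1 v y ^ 2 + v y * iteratedDeriv 2 v y)
        + d * iteratedDeriv 4 u y + e * iteratedDeriv 4 v y) x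
      = 2 * a * (3 * (iteratedDeriv 1 u x * iteratedDeriv 2 u x) + u x * iteratedDeriv 3 u x)
        + b * (iteratedDeriv 3 u x * v x + 3 * (iteratedDeriv 2 u x * iteratedDeriv 1 v x)
            + 3 * (iteratedDeriv 1 u x * iteratedDeriv 2 v x) + u x * iteratedDeriv 3 v x)
        + 2 * c * (3 * (iteratedDeriv 1 v x * iteratedDeriv 2 v x) + v x * iteratedDeriv 3 v x)
        + d * iteratedDeriv 5 u x + e * iteratedDeriv 5 v x := by
  have hu0 := hIter0 hu x
  have hv0 := hIter0 hv x
  have H := (((((((hIter hu 1 x).pow 2).add (hu0.mul (hIter hu 2 x))).const_mul (2 * a)).add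
      (((((hIter hu 2 x).mul hv0).add
          (((hIter hu 1 x).mul (hIter hv 1 x)).const_mul 2)).add
          (hu0.mul (hIter hv 2 x))).const_mul b)).add
      ((((hIter hv 1 x).pow 2).add (hv0.mul (hIter hv 2 x))).const_mul (2 * c))).add
      ((hIter hu 4 x).const_mul d)).add ((hIter hv 4 x).const_mul e)
  exact H.deriv.trans (by ring)

/-- Third iterated derivative of the quadratic density, in closed form. -/
lemma d3F0 (u v : ℝ → ℝ) (hu : ContDiff ℝ (⊤ : ℕ∞) u) (hv : ContDiff ℝ (⊤ : ℕ∞) v)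
    (a b c d e : ℝ) (x : ℝ) :
    iteratedDeriv 3 (fun y => a * u y ^ 2 + b * (u y * v y) + c * v y ^ 2
        + d * iteratedDeriv 2 u y + e * iteratedDeriv 2 v y) x
      = 2 * a * (3 * (iteratedDeriv 1 u x * iteratedDeriv 2 u x) + u x * iteratedDeriv 3 u x)
        + b * (iteratedDeriv 3 u x * v x + 3 * (iteratedDeriv 2 u x * iteratedDeriv 1 v x)
            + 3 * (iteratedDeriv 1 u x * iteratedDeriv 2 v x) + u x * iteratedDeriv 3 v x)
        + 2 * c * (3 * (iteratedDeriv 1 v x * iteratedDeriv 2 v x) + v x * iteratedDeriv 3 v x)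
        + d * iteratedDeriv 5 u x + e * iteratedDeriv 5 v x := by
  have e0 : deriv (fun y => a * u y ^ 2 + b * (u y * v y) + c * v y ^ 2
      + d * iteratedDeriv 2 u y + e * iteratedDeriv 2 v y)
      = (fun y => 2 * a * (u y * iteratedDeriv 1 u y)
        + b * (iteratedDeriv 1 u y * v y + u y * iteratedDeriv 1 v y)
        + 2 * c * (v y * iteratedDeriv 1 v y)
        + d * iteratedDeriv 3 u y + e * iteratedDeriv 3 v y) :=
    funext fun y => dF0 u v hu hv a b c d e y
  have e1 : deriv (fun y => 2 * a * (u y * iteratedDeriv 1 u y)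
        + b * (iteratedDeriv 1 u y * v y + u y * iteratedDeriv 1 v y)
        + 2 * c * (v y * iteratedDeriv 1 v y)
        + d * iteratedDeriv 3 u y + e * iteratedDeriv 3 v y)
      = (fun y => 2 * a * (iteratedDeriv 1 u y ^ 2 + u y * iteratedDeriv 2 u y)
        + b * (iteratedDeriv 2 u y * v y + 2 * (iteratedDeriv 1 u y * iteratedDeriv 1 v y)
            + u y * iteratedDeriv 2 v y)
        + 2 * c * (iteratedDeriv 1 v y ^ 2 + v y * iteratedDeriv 2 v y)
        + d * iteratedDeriv 4 u y + e * iteratedDeriv 4 v y) :=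
    funext fun y => dF1 u v hu hv a b c d e y
  rw [iteratedDeriv_succ', e0, iteratedDeriv_succ', e1, iteratedDeriv_succ', iteratedDeriv_zero]
  exact dF2 u v hu hv a b c d e x

/-- The first commuting flow `Q₁` of the KKS hierarchy is Hamiltonian
with respect to 𝔓₀ with Hamiltonian density `H₂`: applying 𝔓₀ to the variational
derivative `(δH₂/δu, δH₂/δv)` of `H₂` yields `(Q₁ᵘ, Q₁ᵛ)` pointwise. -/
theorem first_flow_hamiltonian_P0_H2 (u v : ℝ → ℝ)
    (hu : ContDiff ℝ (⊤ : ℕ∞) u) (hv : ContDiff ℝ (⊤ : ℕ∞) v) :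
    (∀ x : ℝ,
      iteratedDeriv 3 (fun y => -8 * (u y) ^ 2 + (40 / 9) * u y * v y - (5 / 9) * (v y) ^ 2
          + 2 * iteratedDeriv 2 u y - (5 / 9) * iteratedDeriv 2 v y) x
        - 2 * u x * deriv (fun y => -8 * (u y) ^ 2 + (40 / 9) * u y * v y - (5 / 9) * (v y) ^ 2
            + 2 * iteratedDeriv 2 u y - (5 / 9) * iteratedDeriv 2 v y) x
        - deriv u x * (-8 * (u x) ^ 2 + (40 / 9) * u x * v x - (5 / 9) * (v x) ^ 2
            + 2 * iteratedDeriv 2 u x - (5 / 9) * iteratedDeriv 2 v x)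
      = Q1u u v x) ∧
    (∀ x : ℝ,
      -9 * iteratedDeriv 3 (fun y => (20 / 9) * (u y) ^ 2 - (10 / 9) * u y * v y
          + (7 / 54) * (v y) ^ 2 - (5 / 9) * iteratedDeriv 2 u y
          + (4 / 27) * iteratedDeriv 2 v y) x
        + 12 * v x * deriv (fun y => (20 / 9) * (u y) ^ 2 - (10 / 9) * u y * v y
            + (7 / 54) * (v y) ^ 2 - (5 / 9) * iteratedDeriv 2 u y
            + (4 / 27) * iteratedDeriv 2 v y) x
        + 6 * deriv v x * ((20 / 9) * (u x) ^ 2 - (10 / 9) * u x * v x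
            + (7 / 54) * (v x) ^ 2 - (5 / 9) * iteratedDeriv 2 u x
            + (4 / 27) * iteratedDeriv 2 v x)
      = Q1v u v x) := by
  constructor
  · intro x
    have hL : (fun y => -8 * (u y) ^ 2 + (40 / 9) * u y * v y - (5 / 9) * (v y) ^ 2
          + 2 * iteratedDeriv 2 u y - (5 / 9) * iteratedDeriv 2 v y)
        = (fun y => (-8 : ℝ) * u y ^ 2 + (40 / 9) * (u y * v y) + (-(5 / 9)) * v y ^ 2
          + 2 * iteratedDeriv 2 u y + (-(5 / 9)) * iteratedDeriv 2 v y) := by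
      funext y; ring
    rw [hL, d3F0 u v hu hv (-8) (40 / 9) (-(5 / 9)) 2 (-(5 / 9)) x,
      dF0 u v hu hv (-8) (40 / 9) (-(5 / 9)) 2 (-(5 / 9)) x, Q1u]
    simp only [iteratedDeriv_one]
    ring
  · intro x
    have hL : (fun y => (20 / 9) * (u y) ^ 2 - (10 / 9) * u y * v y
          + (7 / 54) * (v y) ^ 2 - (5 / 9) * iteratedDeriv 2 u y
          + (4 / 27) * iteratedDeriv 2 v y)
        = (fun y => (20 / 9 : ℝ) * u y ^ 2 + (-(10 / 9)) * (u y * v y) + (7 / 54) * v y ^ 2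
          + (-(5 / 9)) * iteratedDeriv 2 u y + (4 / 27) * iteratedDeriv 2 v y) := by
      funext y; ring
    rw [hL, d3F0 u v hu hv (20 / 9) (-(10 / 9)) (7 / 54) (-(5 / 9)) (4 / 27) x,
      dF0 u v hu hv (20 / 9) (-(10 / 9)) (7 / 54) (-(5 / 9)) (4 / 27) x, Q1v]
    simp only [iteratedDeriv_one]
    ring
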